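/- arXiv:1412.0731 — 5 statements merged into one kernel-verified Lean document; each statement's English description precedes it below -/
import Mathlib

section
/- If J : ℝ → ℝ is nonnegative, even, supported in (-d,d), integrates to 1, and is nonincreasing on [0,∞), and 0 < a₀ < a with d, a₀ given, then for any b⁺, b⁻ ≥ 0 there exists k > 0 such that the function S̄ defined by S̄(x) = k + max(b⁺x, -b⁻x) for x ∉ (-a₀,a₀) and S̄(x) = 0 for x ∈ (-a₀,a₀) satisfies (J * S̄)(x) - S̄(x) ≤ 0 for all x with |x| ≥ a₀. -/
open Real MeasureTheory Set

/-!
For `x ≥ a₀` compare the barrier with the affine function `k + bp * y`, which is reproduced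
exactly by convolution with the even unit-mass kernel `J`. The barrier loses at least
`k - bp * d` against it on the hole `(-a₀, a₀)`, where the kernel weight `J (x - y)` is at least
`J (x + a₀)`, and gains at most `(bp + bm) * d` on `(-d, -a₀]`, where by monotonicity the weight
is at most `J (x + a₀)`; elsewhere in the support of `J (x - ·)` the two agree. So once
`(bp + bm) * d ^ 2 ≤ 2 * a₀ * (k - bp * d)` the loss dominates. The case `x ≤ -a₀` follows by
reflecting `y ↦ -y`, which swaps `bp` and `bm`.
-/

noncomputable def barrier (a₀ k bp bm y : ℝ) : ℝ :=
  if |y| < a₀ then 0 else k + max (bp * y) (-bm * y)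

lemma barrier_neg (a₀ k bp bm y : ℝ) : barrier a₀ k bp bm (-y) = barrier a₀ k bm bp y := by
  simp only [barrier, abs_neg, mul_neg, neg_mul, neg_neg, max_comm]

lemma barrier_nonneg {a₀ k bp bm : ℝ} (hk : 0 ≤ k) (hbp : 0 ≤ bp) (hbm : 0 ≤ bm) (y : ℝ) :
    0 ≤ barrier a₀ k bp bm y := by
  unfold barrier
  split_ifs
  · rfl
  · rcases le_total 0 y with hy | hy
    · linarith [(mul_nonneg hbp hy).trans (le_max_left _ (-bm * y))]
    · linarith [(by nlinarith : 0 ≤ -bm * y).trans (le_max_right (bp * y) _)]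

lemma barrier_of_le {a₀ k bp bm y : ℝ} (hbp : 0 ≤ bp) (hbm : 0 ≤ bm) (ha₀ : 0 ≤ a₀)
    (hy : a₀ ≤ y) : barrier a₀ k bp bm y = k + bp * y := by
  rw [barrier, if_neg (by rw [abs_of_nonneg (ha₀.trans hy)]; exact not_lt.2 hy),
    max_eq_left (by nlinarith)]

lemma integral_eq_zero_of_odd {G : Type*} [MeasurableSpace G] [AddGroup G] [MeasurableNeg G]
    {μ : Measure G} [μ.IsNegInvariant] {f : G → ℝ} (hf : ∀ x, f (-x) = -f x) :
    ∫ x, f x ∂μ = 0 := by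
  have h := integral_neg_eq_self f μ
  simp only [hf, integral_neg] at h
  linarith

section Kernel

variable {J : ℝ → ℝ}

lemma integrable_mul_id_of_eq_zero_of_le_abs {d : ℝ} (hJ : Integrable J)
    (hJsupp : ∀ x, d ≤ |x| → J x = 0) : Integrable fun z => J z * z := by
  refine (hJ.norm.const_mul d).mono'
    (hJ.aestronglyMeasurable.mul continuous_id.aestronglyMeasurable) (ae_of_all _ fun z => ?_)
  rcases le_or_gt d |z| with h | h
  · simp [hJsupp z h]
  · rw [norm_mul, mul_comm, Real.norm_eq_abs z]
    exact mul_le_mul_of_nonneg_right h.le (norm_nonneg _)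

lemma integrable_kernel_mul_affine (hJ : Integrable J) (hJz : Integrable fun z => J z * z)
    (x α β : ℝ) : Integrable fun y => J (x - y) * (α + β * y) := by
  refine (((hJ.const_mul (α + β * x)).sub (hJz.const_mul β)).comp_sub_left x).congr
    (ae_of_all _ fun y => ?_)
  simp only [Pi.sub_apply]
  ring

lemma integral_kernel_mul_affine (hJ : Integrable J) (hJz : Integrable fun z => J z * z)
    (hJeven : ∀ x, J (-x) = J x) (hJint : ∫ x, J x = 1) (x α β : ℝ) :
    ∫ y, J (x - y) * (α + β * y) = α + β * x := by
  have hodd : ∫ z, J z * z = 0 := integral_eq_zero_of_odd fun z => by rw [hJeven]; ring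
  rw [← integral_sub_left_eq_self (fun y => J (x - y) * (α + β * y)) volume x]
  calc ∫ z, J (x - (x - z)) * (α + β * (x - z))
      = ∫ z, ((α + β * x) * J z - β * (J z * z)) := by
        congr 1; ext z; rw [sub_sub_cancel]; ring
    _ = α + β * x := by
        rw [integral_sub (hJ.const_mul _) (hJz.const_mul β), integral_const_mul,
          integral_const_mul, hJint, hodd]
        ring

lemma integral_kernel_mul_comp_neg (hJeven : ∀ x, J (-x) = J x) (f : ℝ → ℝ) (x : ℝ) :
    ∫ y, J (x - y) * f y = ∫ y, J (-x - y) * f (-y) := by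
  rw [← integral_neg_eq_self (fun y => J (x - y) * f y)]
  congr 1; ext y
  rw [show x - -y = -(-x - y) by ring, hJeven]

end Kernel

noncomputable def barrierDefect (a₀ d k bp bm : ℝ) : ℝ → ℝ :=
  (Ioc (-d) (-a₀)).indicator (fun _ => (bp + bm) * d) -
    (Ioo (-a₀) a₀).indicator (fun _ => k - bp * d)

lemma integrable_indicator_Ioc_const (a b c : ℝ) : Integrable ((Ioc a b).indicator fun _ => c) :=
  (integrableOn_const measure_Ioc_lt_top.ne).integrable_indicator measurableSet_Ioc

lemma integrable_indicator_Ioo_const (a b c : ℝ) : Integrable ((Ioo a b).indicator fun _ => c) :=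
  (integrableOn_const measure_Ioo_lt_top.ne).integrable_indicator measurableSet_Ioo

lemma integrable_barrierDefect (a₀ d k bp bm : ℝ) : Integrable (barrierDefect a₀ d k bp bm) :=
  (integrable_indicator_Ioc_const _ _ _).sub (integrable_indicator_Ioo_const _ _ _)

lemma integral_barrierDefect_nonpos {a₀ d k bp bm : ℝ} (hd : 0 ≤ d) (ha₀ : 0 ≤ a₀)
    (hbp : 0 ≤ bp) (hbm : 0 ≤ bm) (hk : (bp + bm) * d ^ 2 ≤ 2 * a₀ * (k - bp * d)) :
    ∫ y, barrierDefect a₀ d k bp bm y ≤ 0 := by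
  simp only [barrierDefect, Pi.sub_apply]
  rw [integral_sub (integrable_indicator_Ioc_const _ _ _) (integrable_indicator_Ioo_const _ _ _),
    integral_indicator_const _ measurableSet_Ioc, integral_indicator_const _ measurableSet_Ioo,
    Real.volume_real_Ioc, Real.volume_real_Ioo_of_le (by linarith), smul_eq_mul, smul_eq_mul]
  have hlen : max (-a₀ - -d) 0 ≤ d := max_le (by linarith) hd
  nlinarith [mul_le_mul_of_nonneg_right hlen (mul_nonneg (add_nonneg hbp hbm) hd)]

section Barrier

variable {J : ℝ → ℝ} {d a₀ k bp bm : ℝ}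

lemma kernel_mul_barrier_le (hJpos : ∀ x, 0 ≤ J x) (hJsupp : ∀ x, d ≤ |x| → J x = 0)
    (hJmono : AntitoneOn J (Ici 0)) (ha₀ : 0 < a₀) (hbp : 0 ≤ bp) (hbm : 0 ≤ bm)
    (hk : bp * d ≤ k) {x : ℝ} (hx : a₀ ≤ x) (y : ℝ) :
    J (x - y) * barrier a₀ k bp bm y ≤
      J (x - y) * (k + bp * y) + J (x + a₀) * barrierDefect a₀ d k bp bm y := by
  have hJx := hJpos (x + a₀)
  simp only [barrierDefect, Pi.sub_apply]
  rcases le_or_gt a₀ y with hya | hya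
  · rw [barrier_of_le hbp hbm ha₀.le hya,
      indicator_of_notMem (s := Ioc (-d) (-a₀)) (fun h => by linarith [h.2]),
      indicator_of_notMem (s := Ioo (-a₀) a₀) (fun h => by linarith [h.2])]
    simp
  rcases lt_or_ge (-a₀) y with hya' | hya'
  · rw [barrier, if_pos (abs_lt.2 ⟨hya', hya⟩),
      indicator_of_mem (s := Ioo (-a₀) a₀) ⟨hya', hya⟩,
      indicator_of_notMem (s := Ioc (-d) (-a₀)) (fun h => by linarith [h.2])]
    have hJle : J (x + a₀) ≤ J (x - y) :=
      hJmono (mem_Ici.2 (by linarith)) (mem_Ici.2 (by linarith)) (by linarith)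
    rcases lt_or_ge (x - y) d with hxy | hxy
    · have hA : k - bp * d ≤ k + bp * y := by nlinarith
      nlinarith [mul_le_mul hJle hA (by linarith) (hJpos (x - y))]
    · have h0 : J (x - y) = 0 := hJsupp _ (by rwa [abs_of_nonneg (by linarith)])
      have h0' : J (x + a₀) = 0 := le_antisymm (h0 ▸ hJle) hJx
      simp [h0, h0']
  have hS : barrier a₀ k bp bm y = k + -bm * y := by
    rw [barrier, if_neg (by rw [abs_of_neg (by linarith)]; linarith), max_eq_right (by nlinarith)]
  rw [hS, indicator_of_notMem (s := Ioo (-a₀) a₀) (fun h => by linarith [h.1])]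
  rcases lt_or_ge (-d) y with hyd | hyd
  · rw [indicator_of_mem (s := Ioc (-d) (-a₀)) ⟨hyd, hya'⟩]
    have hJle : J (x - y) ≤ J (x + a₀) :=
      hJmono (mem_Ici.2 (by linarith)) (mem_Ici.2 (by linarith)) (by linarith)
    have hgain : (bp + bm) * -y ≤ (bp + bm) * d :=
      mul_le_mul_of_nonneg_left (by linarith) (by linarith)
    nlinarith [mul_le_mul hgain hJle (hJpos _) (mul_nonneg (add_nonneg hbp hbm) (by linarith))]
  · have h0 : J (x - y) = 0 := hJsupp _ (by rw [abs_of_nonneg (by linarith)]; linarith)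
    rw [indicator_of_notMem (s := Ioc (-d) (-a₀)) (fun h => by linarith [h.1]), h0]
    simp

lemma integral_kernel_mul_barrier_le (hJ : Integrable J) (hJpos : ∀ x, 0 ≤ J x)
    (hJeven : ∀ x, J (-x) = J x) (hJsupp : ∀ x, d ≤ |x| → J x = 0) (hJint : ∫ x, J x = 1)
    (hJmono : AntitoneOn J (Ici 0)) (hd : 0 < d) (ha₀ : 0 < a₀) (hbp : 0 ≤ bp) (hbm : 0 ≤ bm)
    (hk : (bp + bm) * d ^ 2 ≤ 2 * a₀ * (k - bp * d)) {x : ℝ} (hx : a₀ ≤ x) :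
    ∫ y, J (x - y) * barrier a₀ k bp bm y ≤ barrier a₀ k bp bm x := by
  have hkd : bp * d ≤ k := by nlinarith [mul_nonneg (add_nonneg hbp hbm) (sq_nonneg d)]
  have hk0 : 0 ≤ k := (mul_nonneg hbp hd.le).trans hkd
  have hJz := integrable_mul_id_of_eq_zero_of_le_abs hJ hJsupp
  calc ∫ y, J (x - y) * barrier a₀ k bp bm y
      ≤ ∫ y, (J (x - y) * (k + bp * y) + J (x + a₀) * barrierDefect a₀ d k bp bm y) :=
        integral_mono_of_nonneg
          (ae_of_all _ fun y => mul_nonneg (hJpos _) (barrier_nonneg hk0 hbp hbm y))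
          ((integrable_kernel_mul_affine hJ hJz x k bp).add
            ((integrable_barrierDefect a₀ d k bp bm).const_mul _))
          (ae_of_all _ (kernel_mul_barrier_le hJpos hJsupp hJmono ha₀ hbp hbm hkd hx))
    _ = k + bp * x + J (x + a₀) * ∫ y, barrierDefect a₀ d k bp bm y := by
        rw [integral_add (integrable_kernel_mul_affine hJ hJz x k bp)
            ((integrable_barrierDefect a₀ d k bp bm).const_mul _),
          integral_const_mul, integral_kernel_mul_affine hJ hJz hJeven hJint]
    _ ≤ barrier a₀ k bp bm x := by
        rw [barrier_of_le hbp hbm ha₀.le hx]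
        nlinarith [hJpos (x + a₀), integral_barrierDefect_nonpos hd.le ha₀.le hbp hbm hk]

end Barrier

lemma exists_barrier_height {d a₀ : ℝ} (ha₀ : 0 < a₀) (bp bm : ℝ) (hbp : 0 ≤ bp) (hbm : 0 ≤ bm) :
    ∃ k > 0, (bp + bm) * d ^ 2 ≤ 2 * a₀ * (k - bp * d) ∧
      (bm + bp) * d ^ 2 ≤ 2 * a₀ * (k - bm * d) := by
  have hq : 0 ≤ (bp + bm) * d ^ 2 / a₀ := by positivity
  have hq' : a₀ * ((bp + bm) * d ^ 2 / a₀) = (bp + bm) * d ^ 2 := by field_simp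
  refine ⟨|bp * d| + |bm * d| + (bp + bm) * d ^ 2 / a₀ + 1, by positivity, ?_, ?_⟩ <;>
    nlinarith [le_abs_self (bp * d), le_abs_self (bm * d), abs_nonneg (bp * d), abs_nonneg (bm * d)]

theorem supersolution_exists_general
    (J : ℝ → ℝ) (d a₀ : ℝ) (hd : 0 < d)
    (hJpos : ∀ x, 0 ≤ J x) (hJeven : ∀ x, J (-x) = J x)
    (hJsupp : ∀ x, d ≤ |x| → J x = 0)
    (hJint : ∫ x, J x = 1)
    (hJmono : AntitoneOn J (Set.Ici 0))
    (ha₀ : 0 < a₀)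
    (bp bm : ℝ) (hbp : 0 ≤ bp) (hbm : 0 ≤ bm) :
    ∃ k > 0, ∀ x : ℝ, a₀ ≤ |x| →
      (∫ y, J (x - y) *
          (if |y| < a₀ then 0 else k + max (bp * y) (-bm * y))) -
        (k + max (bp * x) (-bm * x)) ≤ 0 := by
  have hJ : Integrable J := Integrable.of_integral_ne_zero (by simp [hJint])
  obtain ⟨k, hk0, hkp, hkm⟩ := exists_barrier_height (d := d) ha₀ bp bm hbp hbm
  refine ⟨k, hk0, fun x hx => ?_⟩
  have hSx : k + max (bp * x) (-bm * x) = barrier a₀ k bp bm x := by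
    rw [barrier, if_neg (not_lt.2 hx)]
  rw [hSx, sub_nonpos]
  rcases le_or_gt 0 x with hx0 | hx0
  · exact integral_kernel_mul_barrier_le hJ hJpos hJeven hJsupp hJint hJmono hd ha₀ hbp hbm hkp
      (by rwa [abs_of_nonneg hx0] at hx)
  · calc ∫ y, J (x - y) * barrier a₀ k bp bm y
        = ∫ y, J (-x - y) * barrier a₀ k bm bp y := by
          rw [integral_kernel_mul_comp_neg hJeven]; simp only [barrier_neg]
      _ ≤ barrier a₀ k bm bp (-x) :=
          integral_kernel_mul_barrier_le hJ hJpos hJeven hJsupp hJint hJmono hd ha₀ hbm hbp hkm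
            (by rwa [abs_of_neg hx0] at hx)
      _ = barrier a₀ k bp bm x := by rw [barrier_neg]

theorem supersolution_exists
    (J : ℝ → ℝ) (d a₀ a : ℝ) (hd : 0 < d)
    (hJpos : ∀ x, 0 ≤ J x) (hJeven : ∀ x, J (-x) = J x)
    (hJsupp : ∀ x, d ≤ |x| → J x = 0)
    (hJint : ∫ x, J x = 1)
    (hJmono : AntitoneOn J (Set.Ici 0))
    (ha₀ : 0 < a₀) (ha : a₀ < a)
    (bp bm : ℝ) (hbp : 0 ≤ bp) (hbm : 0 ≤ bm) :
    ∃ k > 0, ∀ x : ℝ, a₀ ≤ |x| →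
      (∫ y, J (x - y) *
          (if |y| < a₀ then 0 else k + max (bp * y) (-bm * y))) -
        (k + max (bp * x) (-bm * x)) ≤ 0 :=
  supersolution_exists_general J d a₀ hd hJpos hJeven hJsupp hJint hJmono ha₀ bp bm hbp hbm
end

section
/- Let u be a nonnegative solution of ∂ₜ u = J*u - u on (ℝ\H)×(0,∞), u = 0 on H, where J is even with c = ∫ J(z) z² dz < ∞. Then the second momentum M₂(t) = ∫_ℝ u(x,t) x² dx satisfies d/dt M₂(t) ≤ c M(t), where M(t) = ∫_ℝ u(x,t) dx. -/
/-!
Off `H` the time derivative of `u x s * x ^ 2` is `(J * u - u) x ^ 2`, and on `H` it is `0`; since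
`u = 0` on `H` and `J * u ≥ 0`, the derivative of `M₂` is at most `∫ (J * u - u) x ^ 2`. As `J` is
even with second moment `c`, `∫ J (x - y) x ^ 2 dx = y ^ 2 + c`, so by Fubini
`∫ (J * u) x ^ 2 = ∫ u (y ^ 2 + c)` and the bound becomes `c M(t)`. Differentiating under the
integral is justified by domination: `∂ₛ (exp s * u x s) ≥ 0`, so `u (x, s) ≤ exp (τ - s) u (x, τ)`
for `s ≤ τ`.
-/

open Real MeasureTheory Set

structure IsDispersalKernel (J : ℝ → ℝ) (d : ℝ) : Prop where
  nonneg : ∀ x, 0 ≤ J x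
  even : ∀ x, J (-x) = J x
  eq_zero_of_le_abs : ∀ x, d ≤ |x| → J x = 0
  integral_eq_one : ∫ x, J x = 1

namespace IsDispersalKernel

variable {J : ℝ → ℝ} {d : ℝ}

lemma integrable (hJ : IsDispersalKernel J d) : Integrable J :=
  Integrable.of_integral_ne_zero (by simp [hJ.integral_eq_one])

lemma integrable_mul_pow (hJ : IsDispersalKernel J d) (n : ℕ) :
    Integrable fun z => J z * z ^ n := by
  refine (hJ.integrable.norm.const_mul (|d| ^ n)).mono'
    (hJ.integrable.aestronglyMeasurable.mul (by fun_prop)) (.of_forall fun z => ?_)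
  rcases le_or_gt d |z| with hz | hz
  · simp [hJ.eq_zero_of_le_abs z hz]
  · rw [norm_mul, norm_pow, Real.norm_eq_abs, mul_comm]
    gcongr
    exact hz.le.trans (le_abs_self d)

lemma integral_mul_id_eq_zero (hJ : IsDispersalKernel J d) : ∫ z, J z * z = 0 := by
  have h := integral_neg_eq_self (fun z => J z * z) volume
  simp only [hJ.even, mul_neg, integral_neg] at h
  linarith

lemma integrable_mul_add_sq (hJ : IsDispersalKernel J d) (y : ℝ) :
    Integrable fun z => J z * (z + y) ^ 2 := by
  have h1 : Integrable fun z => J z * z := by simpa using hJ.integrable_mul_pow 1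
  refine (((hJ.integrable_mul_pow 2).add (h1.const_mul (2 * y))).add
    (hJ.integrable.const_mul (y ^ 2))).congr (.of_forall fun z => ?_)
  simp only [Pi.add_apply]
  ring

lemma integrable_comp_sub_mul_sq (hJ : IsDispersalKernel J d) (y : ℝ) :
    Integrable fun x => J (x - y) * x ^ 2 := by
  simpa using (hJ.integrable_mul_add_sq y).comp_sub_right y

/-- The cross term `2 y ∫ z, J z * z` vanishes because `J` is even. -/
lemma integral_comp_sub_mul_sq (hJ : IsDispersalKernel J d) (y : ℝ) :
    ∫ x, J (x - y) * x ^ 2 = y ^ 2 + ∫ z, J z * z ^ 2 := by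
  have h1 : Integrable fun z => J z * z := by simpa using hJ.integrable_mul_pow 1
  calc ∫ x, J (x - y) * x ^ 2 = ∫ x, (fun z => J z * (z + y) ^ 2) (x - y) := by simp
    _ = ∫ z, J z * (z + y) ^ 2 := integral_sub_right_eq_self (fun z => J z * (z + y) ^ 2) y
    _ = ∫ z, (J z * z ^ 2 + 2 * y * (J z * z) + y ^ 2 * J z) := by
      congr with z; ring
    _ = y ^ 2 + ∫ z, J z * z ^ 2 := by
      rw [integral_add ?_ (hJ.integrable.const_mul _),
        integral_add (hJ.integrable_mul_pow 2) (h1.const_mul _), integral_const_mul,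
        integral_const_mul, hJ.integral_mul_id_eq_zero, hJ.integral_eq_one]
      · ring
      · exact (hJ.integrable_mul_pow 2).add (h1.const_mul _)

end IsDispersalKernel

namespace MeasureTheory.Integrable

variable {f : ℝ → ℝ}

lemma aestronglyMeasurable_of_mul_one_add_sq
    (hf : Integrable fun x => f x * (1 + x ^ 2)) : AEStronglyMeasurable f := by
  have h : f = fun x => f x * (1 + x ^ 2) * (1 + x ^ 2)⁻¹ := by
    ext x; field_simp
  rw [h]
  exact hf.aestronglyMeasurable.mul (by fun_prop (disch := positivity))

lemma of_mul_one_add_sq (hf : Integrable fun x => f x * (1 + x ^ 2)) :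
    Integrable f :=
  hf.norm.mono' hf.aestronglyMeasurable_of_mul_one_add_sq (.of_forall fun x => by
    rw [norm_mul, Real.norm_of_nonneg (by positivity : (0 : ℝ) ≤ 1 + x ^ 2)]
    nlinarith [norm_nonneg (f x)])

lemma mul_sq_of_mul_one_add_sq (hf : Integrable fun x => f x * (1 + x ^ 2)) :
    Integrable fun x => f x * x ^ 2 :=
  hf.norm.mono' (hf.aestronglyMeasurable_of_mul_one_add_sq.mul (by fun_prop))
    (.of_forall fun x => by
      rw [norm_mul, norm_mul, Real.norm_of_nonneg (sq_nonneg x),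
        Real.norm_of_nonneg (by positivity : (0 : ℝ) ≤ 1 + x ^ 2)]
      nlinarith [norm_nonneg (f x)])

end MeasureTheory.Integrable

section KernelOperator

variable {J v w : ℝ → ℝ} {d : ℝ}

lemma integrable_prod_kernel_mul (hJ0 : ∀ x, 0 ≤ J x) (hJ : AEStronglyMeasurable J)
    (hv : AEStronglyMeasurable v) (hw : Measurable w) (hw0 : ∀ x, 0 ≤ w x)
    (hJw : ∀ y, Integrable fun x => J (x - y) * w x)
    (hvw : Integrable fun y => v y * ∫ x, J (x - y) * w x) :
    Integrable (fun p : ℝ × ℝ => J (p.1 - p.2) * v p.2 * w p.1) (volume.prod volume) := by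
  have hmeas : AEStronglyMeasurable (fun p : ℝ × ℝ => J (p.1 - p.2) * v p.2 * w p.1)
      (volume.prod volume) :=
    ((hJ.comp_quasiMeasurePreserving (quasiMeasurePreserving_sub volume volume)).mul
      hv.comp_snd).mul (hw.comp measurable_fst).aestronglyMeasurable
  refine (integrable_prod_iff' hmeas).2 ⟨.of_forall fun y => ?_, ?_⟩
  · simpa only [mul_right_comm _ (v y), mul_comm (v y)] using (hJw y).const_mul (v y)
  · have hnorm : (fun y => ∫ x, ‖J (x - y) * v y * w x‖) =
        fun y => ‖v y * ∫ x, J (x - y) * w x‖ := by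
      ext y
      rw [norm_mul, Real.norm_of_nonneg (integral_nonneg fun x => mul_nonneg (hJ0 _) (hw0 x)),
        ← integral_const_mul]
      congr with x
      rw [norm_mul, norm_mul, Real.norm_of_nonneg (hJ0 _), Real.norm_of_nonneg (hw0 x)]
      ring
    simpa only [hnorm] using hvw.norm

lemma integrable_kernel_mul (hJ0 : ∀ x, 0 ≤ J x) (hJ : AEStronglyMeasurable J)
    (hv : AEStronglyMeasurable v) (hw : Measurable w) (hw0 : ∀ x, 0 ≤ w x)
    (hJw : ∀ y, Integrable fun x => J (x - y) * w x)
    (hvw : Integrable fun y => v y * ∫ x, J (x - y) * w x) :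
    Integrable fun x => (∫ y, J (x - y) * v y) * w x := by
  simpa only [integral_mul_const] using
    (integrable_prod_kernel_mul hJ0 hJ hv hw hw0 hJw hvw).integral_prod_left

lemma integral_kernel_mul (hJ0 : ∀ x, 0 ≤ J x) (hJ : AEStronglyMeasurable J)
    (hv : AEStronglyMeasurable v) (hw : Measurable w) (hw0 : ∀ x, 0 ≤ w x)
    (hJw : ∀ y, Integrable fun x => J (x - y) * w x)
    (hvw : Integrable fun y => v y * ∫ x, J (x - y) * w x) :
    ∫ x, (∫ y, J (x - y) * v y) * w x = ∫ y, v y * ∫ x, J (x - y) * w x := by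
  simp_rw [← integral_mul_const, ← integral_const_mul]
  rw [integral_integral_swap (integrable_prod_kernel_mul hJ0 hJ hv hw hw0 hJw hvw)]
  congr with y
  congr with x
  ring

lemma ae_integrable_kernel (hJ0 : ∀ x, 0 ≤ J x) (hJ : Integrable J) (hv : Integrable v) :
    ∀ᵐ x, Integrable fun y => J (x - y) * v y := by
  have hJw (y : ℝ) : Integrable fun x => J (x - y) * 1 := by
    simpa using hJ.comp_sub_right y
  have hvw : Integrable fun y => v y * ∫ x, J (x - y) * 1 := by
    simpa [integral_sub_right_eq_self J] using hv.mul_const (∫ x, J x)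
  simpa using (integrable_prod_kernel_mul hJ0 hJ.aestronglyMeasurable hv.aestronglyMeasurable
    measurable_const (fun _ => zero_le_one) hJw hvw).prod_right_ae

lemma IsDispersalKernel.integrable_mul_integral_comp_sub_mul_sq (hJ : IsDispersalKernel J d)
    (hv : Integrable fun y => v y * (1 + y ^ 2)) :
    Integrable fun y => v y * ∫ x, J (x - y) * x ^ 2 := by
  simp_rw [hJ.integral_comp_sub_mul_sq, mul_add]
  exact hv.mul_sq_of_mul_one_add_sq.add (hv.of_mul_one_add_sq.mul_const _)

lemma IsDispersalKernel.integrable_kernel_mul_sq (hJ : IsDispersalKernel J d)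
    (hv : Integrable fun y => v y * (1 + y ^ 2)) :
    Integrable fun x => (∫ y, J (x - y) * v y) * x ^ 2 :=
  integrable_kernel_mul hJ.nonneg hJ.integrable.aestronglyMeasurable
    hv.aestronglyMeasurable_of_mul_one_add_sq (by fun_prop) (fun x => sq_nonneg x)
    hJ.integrable_comp_sub_mul_sq (hJ.integrable_mul_integral_comp_sub_mul_sq hv)

lemma IsDispersalKernel.integral_kernel_mul_sq (hJ : IsDispersalKernel J d)
    (hv : Integrable fun y => v y * (1 + y ^ 2)) :
    ∫ x, (∫ y, J (x - y) * v y) * x ^ 2 =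
      (∫ x, v x * x ^ 2) + (∫ z, J z * z ^ 2) * ∫ x, v x := by
  rw [integral_kernel_mul hJ.nonneg hJ.integrable.aestronglyMeasurable
    hv.aestronglyMeasurable_of_mul_one_add_sq (by fun_prop) (fun x => sq_nonneg x)
    hJ.integrable_comp_sub_mul_sq (hJ.integrable_mul_integral_comp_sub_mul_sq hv)]
  simp_rw [hJ.integral_comp_sub_mul_sq, mul_add]
  rw [integral_add hv.mul_sq_of_mul_one_add_sq (hv.of_mul_one_add_sq.mul_const _),
    integral_mul_const, mul_comm]

end KernelOperator

/-- `s ↦ exp s * f s` is monotone on `(a, ∞)`. -/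
lemma le_exp_sub_mul_of_hasDerivAt {f f' : ℝ → ℝ} {a σ τ : ℝ}
    (hf : ∀ s > a, HasDerivAt f (f' s) s) (hf' : ∀ s > a, -f s ≤ f' s)
    (hσ : a < σ) (hστ : σ ≤ τ) : f σ ≤ exp (τ - σ) * f τ := by
  have hderiv (s : ℝ) (hs : a < s) :
      HasDerivAt (fun s => exp s * f s) (exp s * (f s + f' s)) s := by
    rw [mul_add]
    exact (hasDerivAt_exp s).mul (hf s hs)
  have hmono : MonotoneOn (fun s => exp s * f s) (Ioi a) :=
    monotoneOn_of_hasDerivWithinAt_nonneg (convex_Ioi a)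
      (fun s hs => (hderiv s hs).continuousAt.continuousWithinAt)
      (fun s hs => (hderiv s (by simpa using hs)).hasDerivWithinAt)
      (fun s hs => mul_nonneg (exp_pos s).le (by linarith [hf' s (by simpa using hs)]))
  have h := hmono hσ (hσ.trans_le hστ) hστ
  rw [exp_sub, div_mul_eq_mul_div, le_div_iff₀ (exp_pos σ)]
  simp only at h
  linarith

section DirichletOp

variable {J : ℝ → ℝ} {d : ℝ} {H : Set ℝ} {v : ℝ → ℝ}

/-- The right-hand side `J * v - v` of the equation, set to `0` on `H`, where solutions vanish. -/
noncomputable def dirichletOp (J : ℝ → ℝ) (H : Set ℝ) (v : ℝ → ℝ) (x : ℝ) : ℝ :=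
  Hᶜ.indicator (fun x => (∫ y, J (x - y) * v y) - v x) x

lemma neg_le_dirichletOp (hJ0 : ∀ x, 0 ≤ J x) (hv0 : ∀ x, 0 ≤ v x) (hvH : ∀ x ∈ H, v x = 0)
    (x : ℝ) : -v x ≤ dirichletOp J H v x := by
  by_cases hx : x ∈ H
  · simp [dirichletOp, hx, hvH x hx]
  · simp only [dirichletOp, indicator_of_mem (mem_compl hx), neg_le_sub_iff_le_add,
      le_add_iff_nonneg_left]
    exact integral_nonneg fun y => mul_nonneg (hJ0 _) (hv0 y)

lemma integrable_dirichletOp_mul_sq (hJ : IsDispersalKernel J d) (hH : MeasurableSet H)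
    (hv : Integrable fun y => v y * (1 + y ^ 2)) :
    Integrable fun x => dirichletOp J H v x * x ^ 2 := by
  refine (((hJ.integrable_kernel_mul_sq hv).sub hv.mul_sq_of_mul_one_add_sq).indicator
    hH.compl).congr (.of_forall fun x => ?_)
  by_cases hx : x ∈ H <;> simp [dirichletOp, hx, sub_mul]

theorem integral_dirichletOp_mul_sq_le (hJ : IsDispersalKernel J d) (hH : MeasurableSet H)
    (hv0 : ∀ x, 0 ≤ v x) (hvH : ∀ x ∈ H, v x = 0) (hv : Integrable fun y => v y * (1 + y ^ 2)) :
    ∫ x, dirichletOp J H v x * x ^ 2 ≤ (∫ z, J z * z ^ 2) * ∫ x, v x := by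
  have hK := hJ.integrable_kernel_mul_sq hv
  calc ∫ x, dirichletOp J H v x * x ^ 2
      ≤ ∫ x, (∫ y, J (x - y) * v y) * x ^ 2 - v x * x ^ 2 := by
        refine integral_mono (integrable_dirichletOp_mul_sq hJ hH hv)
          (hK.sub hv.mul_sq_of_mul_one_add_sq) fun x => ?_
        by_cases hx : x ∈ H
        · simp only [dirichletOp, indicator_of_notMem (notMem_compl_iff.2 hx), hvH x hx]
          simpa using mul_nonneg (integral_nonneg fun y => mul_nonneg (hJ.nonneg _) (hv0 y))
            (sq_nonneg x)
        · simp only [dirichletOp, indicator_of_mem (mem_compl hx), sub_mul, le_refl]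
    _ = (∫ z, J z * z ^ 2) * ∫ x, v x := by
      rw [integral_sub hK hv.mul_sq_of_mul_one_add_sq, hJ.integral_kernel_mul_sq hv,
        add_sub_cancel_left]

end DirichletOp

structure IsNonnegDirichletSolution (J : ℝ → ℝ) (H : Set ℝ) (u : ℝ → ℝ → ℝ) : Prop where
  nonneg : ∀ x t, 0 ≤ u x t
  hasDerivAt : ∀ x ∉ H, ∀ t > 0,
    HasDerivAt (fun s => u x s) ((∫ y, J (x - y) * u y t) - u x t) t
  eq_zero : ∀ x ∈ H, ∀ t > 0, u x t = 0
  integrable_mul_one_add_sq : ∀ t ≥ 0, Integrable fun x => u x t * (1 + x ^ 2)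

namespace IsNonnegDirichletSolution

variable {J : ℝ → ℝ} {H : Set ℝ} {u : ℝ → ℝ → ℝ}

lemma hasDerivAt_dirichletOp (hu : IsNonnegDirichletSolution J H u) (x : ℝ) {s : ℝ}
    (hs : 0 < s) : HasDerivAt (fun σ => u x σ) (dirichletOp J H (fun y => u y s) x) s := by
  by_cases hx : x ∈ H
  · simp only [dirichletOp, indicator_of_notMem (notMem_compl_iff.2 hx)]
    refine (hasDerivAt_const s 0).congr_of_eventuallyEq ?_
    filter_upwards [Ioi_mem_nhds hs] with σ hσ using hu.eq_zero x hx σ hσ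
  · simpa only [dirichletOp, indicator_of_mem (mem_compl hx)] using hu.hasDerivAt x hx s hs

lemma le_exp_sub_mul (hu : IsNonnegDirichletSolution J H u) (hJ0 : ∀ x, 0 ≤ J x) (x : ℝ)
    {σ τ : ℝ} (hσ : 0 < σ) (hστ : σ ≤ τ) : u x σ ≤ exp (τ - σ) * u x τ :=
  le_exp_sub_mul_of_hasDerivAt (fun _ hs => hu.hasDerivAt_dirichletOp x hs)
    (fun s hs => neg_le_dirichletOp hJ0 (hu.nonneg · s) (hu.eq_zero · · s hs) x) hσ hστ

lemma kernel_le_exp_sub_mul (hu : IsNonnegDirichletSolution J H u) (hJ0 : ∀ x, 0 ≤ J x)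
    {x σ τ : ℝ} (hx : Integrable fun y => J (x - y) * u y τ) (hσ : 0 < σ) (hστ : σ ≤ τ) :
    ∫ y, J (x - y) * u y σ ≤ exp (τ - σ) * ∫ y, J (x - y) * u y τ := by
  rw [← integral_const_mul]
  refine integral_mono_of_nonneg (.of_forall fun y => mul_nonneg (hJ0 _) (hu.nonneg y σ))
    (hx.const_mul _) (.of_forall fun y => ?_)
  calc J (x - y) * u y σ ≤ J (x - y) * (exp (τ - σ) * u y τ) :=
        mul_le_mul_of_nonneg_left (hu.le_exp_sub_mul hJ0 y hσ hστ) (hJ0 _)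
    _ = exp (τ - σ) * (J (x - y) * u y τ) := by ring

lemma abs_dirichletOp_le (hu : IsNonnegDirichletSolution J H u) (hJ0 : ∀ x, 0 ≤ J x)
    {x s τ : ℝ} (hx : Integrable fun y => J (x - y) * u y τ) (hs : 0 < s) (hsτ : s ≤ τ) :
    |dirichletOp J H (fun y => u y s) x| ≤ exp τ * ((∫ y, J (x - y) * u y τ) + u x τ) := by
  have hK0 (σ : ℝ) : 0 ≤ ∫ y, J (x - y) * u y σ :=
    integral_nonneg fun y => mul_nonneg (hJ0 _) (hu.nonneg y σ)
  calc |dirichletOp J H (fun y => u y s) x| ≤ |(∫ y, J (x - y) * u y s) - u x s| :=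
        norm_indicator_le_norm_self (fun x => (∫ y, J (x - y) * u y s) - u x s) x
    _ ≤ (∫ y, J (x - y) * u y s) + u x s :=
        abs_le.2 ⟨by linarith [hK0 s, hu.nonneg x s], by linarith [hK0 s, hu.nonneg x s]⟩
    _ ≤ exp (τ - s) * ((∫ y, J (x - y) * u y τ) + u x τ) := by
        rw [mul_add]
        exact add_le_add (hu.kernel_le_exp_sub_mul hJ0 hx hs hsτ) (hu.le_exp_sub_mul hJ0 x hs hsτ)
    _ ≤ exp τ * ((∫ y, J (x - y) * u y τ) + u x τ) := by
        gcongr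
        · linarith [hK0 τ, hu.nonneg x τ]
        · linarith

/-- The dominating function is `exp τ * ((J * u + u)(x, τ) * x ^ 2)` with `τ = 2 t`: both
`exp s * u x s` and `exp s * (J * u)(x, s)` increase in `s`. -/
theorem hasDerivAt_integral_mul_sq (hu : IsNonnegDirichletSolution J H u) {d : ℝ}
    (hJ : IsDispersalKernel J d) (hH : MeasurableSet H) {t : ℝ} (ht : 0 < t) :
    HasDerivAt (fun s => ∫ x, u x s * x ^ 2)
      (∫ x, dirichletOp J H (fun y => u y t) x * x ^ 2) t := by
  set τ := 2 * t
  have hτ : 0 < τ := by positivity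
  have huτ := hu.integrable_mul_one_add_sq τ hτ.le
  have hbound : ∀ᵐ x, ∀ s ∈ Ioo 0 τ, ‖dirichletOp J H (fun y => u y s) x * x ^ 2‖ ≤
      exp τ * ((∫ y, J (x - y) * u y τ) * x ^ 2 + u x τ * x ^ 2) := by
    filter_upwards [ae_integrable_kernel hJ.nonneg hJ.integrable huτ.of_mul_one_add_sq]
      with x hx s hs
    rw [norm_mul, Real.norm_eq_abs, Real.norm_of_nonneg (sq_nonneg x), ← add_mul, ← mul_assoc]
    exact mul_le_mul_of_nonneg_right (hu.abs_dirichletOp_le hJ.nonneg hx hs.1 hs.2.le)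
      (sq_nonneg x)
  have hmeas : ∀ᶠ s in nhds t, AEStronglyMeasurable (fun x => u x s * x ^ 2) := by
    filter_upwards [Ioi_mem_nhds ht] with s hs using
      (hu.integrable_mul_one_add_sq s (le_of_lt hs)).mul_sq_of_mul_one_add_sq.aestronglyMeasurable
  exact (hasDerivAt_integral_of_dominated_loc_of_deriv_le (Ioo_mem_nhds ht (by linarith)) hmeas
    (hu.integrable_mul_one_add_sq t ht.le).mul_sq_of_mul_one_add_sq
    (integrable_dirichletOp_mul_sq hJ hH
      (hu.integrable_mul_one_add_sq t ht.le)).aestronglyMeasurable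
    hbound (((hJ.integrable_kernel_mul_sq huτ).add huτ.mul_sq_of_mul_one_add_sq).const_mul _)
    (.of_forall fun x s hs => (hu.hasDerivAt_dirichletOp x hs.1).mul_const (x ^ 2))).2

end IsNonnegDirichletSolution

theorem second_momentum_growth_general
    (J : ℝ → ℝ) (d c : ℝ)
    (hJpos : ∀ x, 0 ≤ J x) (hJeven : ∀ x, J (-x) = J x)
    (hJsupp : ∀ x, d ≤ |x| → J x = 0)
    (hJint : ∫ x, J x = 1)
    (hc : ∫ z, J z * z ^ 2 = c)
    (H : Set ℝ) (hHopen : IsOpen H)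
    (u : ℝ → ℝ → ℝ)
    (hupos : ∀ x t, 0 ≤ u x t)
    (hPDE : ∀ x ∉ H, ∀ t > 0,
      HasDerivAt (fun s => u x s)
        ((∫ y, J (x - y) * u y t) - u x t) t)
    (hDir : ∀ x ∈ H, ∀ t > 0, u x t = 0)
    (hmom : ∀ t ≥ 0, Integrable (fun x => u x t * (1 + x ^ 2))) :
    ∀ t > 0, ∃ D : ℝ,
      HasDerivAt (fun s => ∫ x, u x s * x ^ 2) D t ∧
      D ≤ c * ∫ x, u x t := by
  intro t ht
  have hJ : IsDispersalKernel J d := ⟨hJpos, hJeven, hJsupp, hJint⟩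
  have hu : IsNonnegDirichletSolution J H u := ⟨hupos, hPDE, hDir, hmom⟩
  refine ⟨_, hu.hasDerivAt_integral_mul_sq hJ hHopen.measurableSet ht, ?_⟩
  rw [← hc]
  exact integral_dirichletOp_mul_sq_le hJ hHopen.measurableSet (hupos · t) (hDir · · t ht)
    (hmom t ht.le)

theorem second_momentum_growth
    (J : ℝ → ℝ) (d c : ℝ) (hd : 0 < d)
    (hJpos : ∀ x, 0 ≤ J x) (hJeven : ∀ x, J (-x) = J x)
    (hJsupp : ∀ x, d ≤ |x| → J x = 0)
    (hJint : ∫ x, J x = 1)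
    (hc : ∫ z, J z * z ^ 2 = c)
    (H : Set ℝ) (hHopen : IsOpen H) (hHbdd : Bornology.IsBounded H)
    (u : ℝ → ℝ → ℝ)
    (hupos : ∀ x t, 0 ≤ u x t)
    (hPDE : ∀ x ∉ H, ∀ t > 0,
      HasDerivAt (fun s => u x s)
        ((∫ y, J (x - y) * u y t) - u x t) t)
    (hDir : ∀ x ∈ H, ∀ t > 0, u x t = 0)
    (hmom : ∀ t ≥ 0, Integrable (fun x => u x t * (1 + x ^ 2))) :
    ∀ t > 0, ∃ D : ℝ,
      HasDerivAt (fun s => ∫ x, u x s * x ^ 2) D t ∧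
      D ≤ c * ∫ x, u x t :=
  second_momentum_growth_general J d c hJpos hJeven hJsupp hJint hc H hHopen u hupos hPDE hDir hmom
end

section
/- Suppose there are constants K₁, C̄, c, ‖u₀‖_∞ such that a nonnegative function u : ℝ × [0,∞) → ℝ satisfies: (i) u(x,t) ≤ e^{-(t-t̄)}‖u₀‖_∞ + C̄ (t - t̄)^{-1/2} M(t̄) for all 0 < t̄ < t, where M(t̄) = ∫ u(·,t̄); (ii) M(t) ≤ K₁ ‖u(·,t)‖_∞^{1/2} for all t; (iii) ‖u(·,t)‖_∞ ≤ C₀ t^{-1/2} for t ≥ 1/2 with C₀ ≥ 1. Then there is a constant C with ‖u(·,t)‖_∞ ≤ C t^{-1} for all t ≥ 1/2. (Iterative decay improvement: with α_k = 1 - 2^{-(k+1)}, t_k = 2^{k-1}, there is a bounded nondecreasing sequence C_k with ‖u(·,t)‖_∞ ≤ C_k t^{-α_k} for t ≥ t_k.) -/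
/-!
Write `g t = t · sup_x u(x, t)`. Estimates (i) at `t̄ = t / 2` and (ii) give
`g t ≤ 2 U₀ + 2 C̄ K₁ √(g (t / 2))` for `t ≥ 1`, while (iii) bounds `g` by `C₀` on `[1/2, 1)`.
For `M ≥ max 1 (2 U₀ + 2 C̄ K₁ + C₀)` the bound `g ≤ M²` is therefore preserved when passing
from one dyadic interval `[2ⁿ⁻¹, 2ⁿ)` to the next; `M²` is the fixed point of the paper's
recursion `C_{k+1} = H √C_k`.
-/

open Real MeasureTheory Set Filter

theorem forall_ge_of_dyadic_step {P : ℝ → Prop} {a : ℝ} (ha : 0 < a)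
    (hbase : ∀ t, a ≤ t → t < 2 * a → P t) (hstep : ∀ t, 2 * a ≤ t → P (t / 2) → P t) :
    ∀ t, a ≤ t → P t := by
  have hscale : ∀ n : ℕ, ∀ t, a ≤ t → t < 2 ^ n * a → P t := by
    intro n
    induction n with
    | zero => intro t hat ht; simp only [pow_zero, one_mul] at ht; linarith
    | succ n ih =>
      intro t hat ht
      rcases lt_or_ge t (2 * a) with hsmall | hlarge
      · exact hbase t hat hsmall
      · exact hstep t hlarge (ih (t / 2) (by linarith) (by rw [pow_succ] at ht; linarith))
  intro t hat
  obtain ⟨n, hn⟩ := pow_unbounded_of_one_lt (t / a) one_lt_two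
  exact hscale n t hat (by rwa [div_lt_iff₀ ha] at hn)

theorem exp_neg_le_inv {s : ℝ} (hs : 0 < s) : exp (-s) ≤ s⁻¹ := by
  rw [exp_neg]
  exact inv_anti₀ hs (by linarith [add_one_le_exp s])

theorem rpow_neg_half_mul_sqrt_div {s : ℝ} (hs : 0 < s) (L : ℝ) :
    s ^ (-(1 / 2) : ℝ) * √(L / s) = √L / s := by
  rw [rpow_neg hs.le, ← sqrt_eq_rpow, sqrt_div' L hs.le, ← div_eq_inv_mul, div_div,
    mul_self_sqrt hs.le]

theorem le_div_of_duhamel_of_mass_le {a m F U₀ Cbar K₁ L s : ℝ} (hs : 0 < s)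
    (hU₀ : 0 ≤ U₀) (hCbar : 0 ≤ Cbar) (hK₁ : 0 ≤ K₁)
    (hduhamel : a ≤ exp (-s) * U₀ + Cbar * s ^ (-(1 / 2) : ℝ) * m)
    (hmass : m ≤ K₁ * √F) (hF : F ≤ L / s) :
    a ≤ (U₀ + Cbar * K₁ * √L) / s := by
  have hexp : exp (-s) * U₀ ≤ U₀ / s := by
    rw [div_eq_inv_mul]
    exact mul_le_mul_of_nonneg_right (exp_neg_le_inv hs) hU₀
  have hmass' : m ≤ K₁ * √(L / s) :=
    hmass.trans (mul_le_mul_of_nonneg_left (sqrt_le_sqrt hF) hK₁)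
  calc a ≤ exp (-s) * U₀ + Cbar * s ^ (-(1 / 2) : ℝ) * m := hduhamel
    _ ≤ U₀ / s + Cbar * s ^ (-(1 / 2) : ℝ) * (K₁ * √(L / s)) := by gcongr
    _ = U₀ / s + Cbar * K₁ * (s ^ (-(1 / 2) : ℝ) * √(L / s)) := by ring
    _ = (U₀ + Cbar * K₁ * √L) / s := by rw [rpow_neg_half_mul_sqrt_div hs]; ring

theorem iterative_decay_bootstrap_general
    (u : ℝ → ℝ → ℝ) (K₁ Cbar U₀ C₀ : ℝ)
    (hK₁ : 0 ≤ K₁) (hCbar : 0 ≤ Cbar) (hU₀ : 0 ≤ U₀)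
    (hC₀ : 1 ≤ C₀)
    -- (i) Duhamel-type estimate
    (hi : ∀ x : ℝ, ∀ tb t : ℝ, 0 < tb → tb < t →
      u x t ≤ Real.exp (-(t - tb)) * U₀ +
        Cbar * (t - tb) ^ (-(1/2) : ℝ) * ∫ y, u y tb)
    -- (ii) mass controlled by sup
    (hii : ∀ t : ℝ, 0 < t → (∫ y, u y t) ≤ K₁ * Real.sqrt (⨆ x, u x t))
    -- (iii) initial half-rate decay
    (hiii : ∀ t : ℝ, 1/2 ≤ t → (⨆ x, u x t) ≤ C₀ * t ^ (-(1/2) : ℝ)) :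
    ∃ C : ℝ, ∀ t : ℝ, 1/2 ≤ t → ∀ x : ℝ, u x t ≤ C * t⁻¹ := by
  set M := 2 * U₀ + 2 * Cbar * K₁ + C₀
  have hM : 1 ≤ M := by have := mul_nonneg hCbar hK₁; linarith
  have habsorb : 2 * (U₀ + Cbar * K₁ * M) ≤ M ^ 2 := by
    nlinarith [mul_nonneg hU₀ (sub_nonneg.2 hM), mul_nonneg hCbar hK₁]
  refine ⟨M ^ 2, forall_ge_of_dyadic_step (by norm_num) (fun t ht ht1 x => ?_) ?_⟩
  · have ht0 : 0 < t := by linarith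
    have hbdd : BddAbove (range fun x => u x t) :=
      ⟨_, forall_mem_range.2 fun x => hi x (t / 2) t (by linarith) (by linarith)⟩
    calc u x t ≤ ⨆ x, u x t := le_ciSup hbdd x
      _ ≤ C₀ * t ^ (-(1 / 2) : ℝ) := hiii t ht
      _ ≤ C₀ * t ^ (-1 : ℝ) := mul_le_mul_of_nonneg_left
          (rpow_le_rpow_of_exponent_ge ht0 (by linarith) (by norm_num)) (by linarith)
      _ ≤ M ^ 2 * t⁻¹ := by rw [rpow_neg_one]; gcongr; nlinarith
  · intro t ht hprev x
    have hs : 0 < t / 2 := by linarith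
    have hduhamel := hi x (t / 2) t hs (by linarith)
    rw [show t - t / 2 = t / 2 by ring] at hduhamel
    have hF : (⨆ x, u x (t / 2)) ≤ M ^ 2 / (t / 2) := ciSup_le hprev
    calc u x t ≤ (U₀ + Cbar * K₁ * √(M ^ 2)) / (t / 2) :=
          le_div_of_duhamel_of_mass_le hs hU₀ hCbar hK₁ hduhamel (hii _ hs) hF
      _ = 2 * (U₀ + Cbar * K₁ * M) * t⁻¹ := by
        rw [sqrt_sq (by linarith)]; field_simp
      _ ≤ M ^ 2 * t⁻¹ := by gcongr

theorem iterative_decay_bootstrap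
    (u : ℝ → ℝ → ℝ) (K₁ Cbar c U₀ C₀ : ℝ)
    (hupos : ∀ x t, 0 ≤ u x t)
    (hK₁ : 0 ≤ K₁) (hCbar : 0 ≤ Cbar) (hc : 0 ≤ c) (hU₀ : 0 ≤ U₀)
    (hC₀ : 1 ≤ C₀)
    -- (i) Duhamel-type estimate
    (hi : ∀ x : ℝ, ∀ tb t : ℝ, 0 < tb → tb < t →
      u x t ≤ Real.exp (-(t - tb)) * U₀ +
        Cbar * (t - tb) ^ (-(1/2) : ℝ) * ∫ y, u y tb)
    -- (ii) mass controlled by sup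
    (hii : ∀ t : ℝ, 0 < t → (∫ y, u y t) ≤ K₁ * Real.sqrt (⨆ x, u x t))
    -- (iii) initial half-rate decay
    (hiii : ∀ t : ℝ, 1/2 ≤ t → (⨆ x, u x t) ≤ C₀ * t ^ (-(1/2) : ℝ)) :
    ∃ C : ℝ, ∀ t : ℝ, 1/2 ≤ t → ∀ x : ℝ, u x t ≤ C * t⁻¹ :=
  iterative_decay_bootstrap_general u K₁ Cbar U₀ C₀ hK₁ hCbar hU₀ hC₀ hi hii hiii
end

section
/- Fix 0 < γ < 1, κ ∈ (0,1), d > a₀ > 0, and 𝔮 > 0. Define R(x,t) = ((|x|+d)^γ + k) t^{-(3+κ)/2} for |x| ≥ a₀ and R(x,t) = 0 for |x| < a₀. Then there exist δ ∈ (0,1) and k > 0 such that for all (x,t) with a₀ ≤ |x| ≤ δ t^{1/2} and t ≥ (d/δ)², one has ∂ₜR(x,t) - (J*R - R)(x,t) ≥ (𝔮/8) γ(1-γ) (|x|+d)^{γ-2} t^{-(3+κ)/2}, where J is an even probability kernel supported in (-d,d), nonincreasing on [0,∞), with ∫ J(z) z² dz = 2𝔮. -/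
/-!
For `x ≥ a₀` the spatial factor `φ = (|·| + d)^γ + k`, cut off to `0` on `(-a₀, a₀)`, gains from
the nonlocal diffusion. Concavity of `s ↦ s^γ`, with its second order Taylor remainder integrated
against the even kernel, gives `∫ J(z) (x + d - z)^γ dz ≤ (x + d)^γ - q γ (1 - γ) (x + 2d)^(γ-2)`.
The cut-off costs at most `(2d)^γ ∫_{z ≥ x} J ≤ (2d)^γ d J(x)` and saves at least
`k ∫_{x - a₀ < z ≤ x} J ≥ k a₀ J(x)`, by monotonicity of `J`; the two balance for
`k = (2d)^γ d / a₀`. The time derivative costs `p φ(x) / t` with `p = (3 + κ)/2`; since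
`|x| + d ≤ 2δ√t`, this is at most `4 p δ² (1 + d/a₀) (|x| + d)^(γ-2)`, half of the gain once `δ`
is small.
-/

open Real MeasureTheory Set

theorem ConcaveOn.le_add_mul_sub_of_hasDerivAt {S : Set ℝ} {f : ℝ → ℝ} {f' x y : ℝ}
    (hf : ConcaveOn ℝ S f) (hx : x ∈ S) (hy : y ∈ S) (hf' : HasDerivAt f f' x) :
    f y ≤ f x + f' * (y - x) := by
  rcases lt_trichotomy x y with hxy | rfl | hyx
  · have h := hf.slope_le_of_hasDerivAt hx hy hxy hf'
    rw [slope_def_field, div_le_iff₀ (sub_pos.2 hxy)] at h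
    linarith
  · simp
  · have h := hf.le_slope_of_hasDerivAt hy hx hyx hf'
    rw [slope_def_field, le_div_iff₀ (sub_pos.2 hyx)] at h
    linarith

section Taylor

variable {γ b c d z : ℝ}

theorem hasDerivAt_rpow_sub_add_mul_sq (hz : z < b) :
    HasDerivAt (fun z => (b - z) ^ γ + c * z ^ 2) (-γ * (b - z) ^ (γ - 1) + 2 * c * z) z := by
  refine ((((hasDerivAt_id' z).const_sub b).rpow_const (p := γ) (Or.inl (sub_pos.2 hz).ne')).add
    ((hasDerivAt_pow 2 z).const_mul c)).congr_deriv ?_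
  push_cast; ring

theorem concaveOn_rpow_sub_add_mul_sq (hγ : 0 ≤ γ) (hγ1 : γ ≤ 1) (hb : d < b) :
    ConcaveOn ℝ (Icc (-d) d)
      (fun z => (b - z) ^ γ + γ * (1 - γ) / 2 * (b + d) ^ (γ - 2) * z ^ 2) := by
  set c := γ * (1 - γ) / 2 * (b + d) ^ (γ - 2)
  have hpos : ∀ z ∈ Icc (-d) d, 0 < b - z := fun z hz => by linarith [hz.2]
  have hderiv2 : ∀ z ∈ Icc (-d) d, HasDerivAt (fun z => -γ * (b - z) ^ (γ - 1) + 2 * c * z)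
      (γ * (γ - 1) * (b - z) ^ (γ - 2) + 2 * c) z := fun z hz => by
    refine ((((hasDerivAt_id' z).const_sub b).rpow_const (p := γ - 1)
      (Or.inl (hpos z hz).ne')).const_mul (-γ)).add ((hasDerivAt_id' z).const_mul (2 * c))
      |>.congr_deriv ?_
    rw [show γ - 1 - 1 = γ - 2 by ring]; ring
  have hderiv : ∀ z ∈ Icc (-d) d, HasDerivAt (fun z => (b - z) ^ γ + c * z ^ 2)
      (-γ * (b - z) ^ (γ - 1) + 2 * c * z) z := fun z hz =>
    hasDerivAt_rpow_sub_add_mul_sq (sub_pos.1 (hpos z hz))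
  apply concaveOn_of_hasDerivWithinAt2_nonpos (convex_Icc _ _)
    (fun z hz => (hderiv z hz).continuousAt.continuousWithinAt)
    (fun z hz => (hderiv z (interior_subset hz)).hasDerivWithinAt)
    (fun z hz => (hderiv2 z (interior_subset hz)).hasDerivWithinAt)
  intro z hz
  have hz := interior_subset hz
  have hmono : (b + d) ^ (γ - 2) ≤ (b - z) ^ (γ - 2) :=
    rpow_le_rpow_of_nonpos (hpos z hz) (by linarith [hz.1]) (by linarith)
  have : 0 ≤ γ * (1 - γ) := mul_nonneg hγ (by linarith)
  simp only [c]
  nlinarith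

theorem rpow_sub_le_of_mem_Icc (hγ : 0 ≤ γ) (hγ1 : γ ≤ 1) (hb : d < b) (hz : z ∈ Icc (-d) d) :
    (b - z) ^ γ ≤ b ^ γ - γ * b ^ (γ - 1) * z - γ * (1 - γ) / 2 * (b + d) ^ (γ - 2) * z ^ 2 := by
  have hd : 0 ≤ d := by linarith [hz.1, hz.2]
  have := (concaveOn_rpow_sub_add_mul_sq hγ hγ1 hb).le_add_mul_sub_of_hasDerivAt
    ⟨by linarith, hd⟩ hz (hasDerivAt_rpow_sub_add_mul_sq (by linarith))
  norm_num at this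
  linarith

end Taylor

section Kernel

variable {J : ℝ → ℝ} {d : ℝ}

theorem integrable_mul_of_continuous (hJ : Integrable J) (hJsupp : ∀ x, d ≤ |x| → J x = 0)
    {g : ℝ → ℝ} (hg : Continuous g) : Integrable (fun z => J z * g z) := by
  have hsupp : Function.support (fun z => J z * g z) ⊆ Icc (-d) d := fun z hz => by
    by_contra h
    exact hz (by simp [hJsupp z (not_le.1 (mt abs_le.1 h)).le])
  rw [← integrableOn_iff_integrable_of_support_subset hsupp]
  exact hJ.integrableOn.mul_continuousOn hg.continuousOn isCompact_Icc

theorem integral_mul_id_eq_zero_of_even (hJeven : ∀ x, J (-x) = J x) :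
    ∫ z, J z * z = 0 := by
  have h := integral_neg_eq_self (fun z => J z * z) volume
  simp only [hJeven, mul_neg, integral_neg] at h
  linarith

theorem integral_mul_sub_eq_integral_mul_abs_sub (hJeven : ∀ x, J (-x) = J x)
    {g : ℝ → ℝ} (hgeven : ∀ x, g (-x) = g x) (x : ℝ) :
    ∫ y, J (x - y) * g y = ∫ z, J z * g (|x| - z) := by
  rw [← integral_sub_left_eq_self _ volume x]
  simp only [sub_sub_cancel]
  rcases abs_choice x with hx | hx
  · rw [hx]
  · rw [hx, ← integral_neg_eq_self]
    congr 1; ext z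
    rw [hJeven, ← hgeven]; ring_nf

theorem integral_mul_rpow_sub_le (hJpos : ∀ x, 0 ≤ J x) (hJsupp : ∀ x, d ≤ |x| → J x = 0)
    (hJ : Integrable J) {γ b : ℝ} (hγ : 0 ≤ γ) (hγ1 : γ ≤ 1) (hb : d < b) :
    ∫ z, J z * (b - z) ^ γ ≤ b ^ γ * (∫ z, J z) - γ * b ^ (γ - 1) * (∫ z, J z * z)
      - γ * (1 - γ) / 2 * (b + d) ^ (γ - 2) * ∫ z, J z * z ^ 2 := by
  have hpointwise : ∀ z, J z * (b - z) ^ γ ≤ b ^ γ * J z - γ * b ^ (γ - 1) * (J z * z)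
      - γ * (1 - γ) / 2 * (b + d) ^ (γ - 2) * (J z * z ^ 2) := fun z => by
    by_cases hz : d ≤ |z|
    · simp [hJsupp z hz]
    have := mul_le_mul_of_nonneg_left
      (rpow_sub_le_of_mem_Icc hγ hγ1 hb (abs_le.1 (not_le.1 hz).le)) (hJpos z)
    linarith
  have hint : ∀ {g : ℝ → ℝ}, Continuous g → Integrable (fun z => J z * g z) :=
    integrable_mul_of_continuous hJ hJsupp
  have h0 : Integrable fun z => b ^ γ * J z := hJ.const_mul _
  have h1 : Integrable fun z => γ * b ^ (γ - 1) * (J z * z) := (hint continuous_id).const_mul _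
  have h2 : Integrable fun z => γ * (1 - γ) / 2 * (b + d) ^ (γ - 2) * (J z * z ^ 2) :=
    (hint (continuous_pow 2)).const_mul _
  calc ∫ z, J z * (b - z) ^ γ
      ≤ ∫ z, (b ^ γ * J z - γ * b ^ (γ - 1) * (J z * z)
          - γ * (1 - γ) / 2 * (b + d) ^ (γ - 2) * (J z * z ^ 2)) :=
        integral_mono (hint ((continuous_const.sub continuous_id).rpow_const fun _ => Or.inr hγ))
          ((h0.sub h1).sub h2) hpointwise
    _ = _ := by
        rw [integral_sub (h0.sub' h1) h2, integral_sub h0 h1, integral_const_mul,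
          integral_const_mul, integral_const_mul]

theorem setIntegral_Ici_le_mul (hJ : Integrable J) (hJsupp : ∀ x, d ≤ |x| → J x = 0)
    (hJmono : AntitoneOn J (Ici 0)) (hd : 0 ≤ d) {x : ℝ} (hx : 0 ≤ x) :
    ∫ z in Ici x, J z ≤ d * J x := by
  have hvanish : ∀ z ∈ Ici x \ Ico x (x + d), J z = 0 := fun z hz =>
    hJsupp z (by
      have : x + d ≤ z := by simpa [mem_Ici.1 hz.1] using hz.2
      rw [abs_of_nonneg (by linarith)]; linarith)
  rw [setIntegral_eq_of_subset_of_forall_sdiff_eq_zero measurableSet_Ici Ico_subset_Ici_self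
    hvanish]
  calc ∫ z in Ico x (x + d), J z ≤ ∫ _ in Ico x (x + d), J x :=
        setIntegral_mono_on hJ.integrableOn (integrableOn_const measure_Ico_lt_top.ne)
          measurableSet_Ico fun z hz => hJmono hx (hx.trans hz.1) hz.1
    _ = d * J x := by simp [hd]

theorem mul_le_setIntegral_Ioc (hJ : Integrable J) (hJmono : AntitoneOn J (Ici 0))
    {a x : ℝ} (ha : 0 ≤ a) (hax : a ≤ x) :
    a * J x ≤ ∫ z in Ioc (x - a) x, J z :=
  calc a * J x = ∫ _ in Ioc (x - a) x, J x := by simp [ha]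
    _ ≤ ∫ z in Ioc (x - a) x, J z :=
        setIntegral_mono_on (integrableOn_const measure_Ioc_lt_top.ne) hJ.integrableOn
          measurableSet_Ioc fun z hz =>
            hJmono (by linarith [hz.1] : (0:ℝ) ≤ z) (by linarith : (0:ℝ) ≤ x) hz.2

end Kernel

theorem rpow_div_four_le {r s s' : ℝ} (hr : -2 ≤ r) (hr0 : r ≤ 0) (hs' : 0 < s')
    (hs : s' ≤ 2 * s) : s ^ r / 4 ≤ s' ^ r := by
  have : 0 < s := by linarith
  calc s ^ r / 4 = 2 ^ (-2 : ℝ) * s ^ r := by norm_num; ring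
    _ ≤ 2 ^ r * s ^ r := by gcongr; norm_num
    _ = (2 * s) ^ r := (mul_rpow (by norm_num) (by linarith)).symm
    _ ≤ s' ^ r := rpow_le_rpow_of_nonpos hs' hs hr0

/-- The spatial factor of `R`: `R x t = correctionProfile a₀ d γ k x * t ^ (-(3 + κ) / 2)`. -/
noncomputable def correctionProfile (a₀ d γ k y : ℝ) : ℝ :=
  if |y| < a₀ then 0 else (|y| + d) ^ γ + k

section Profile

variable {a₀ d γ k : ℝ}

theorem correctionProfile_neg (y : ℝ) :
    correctionProfile a₀ d γ k (-y) = correctionProfile a₀ d γ k y := by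
  simp [correctionProfile]

theorem correctionProfile_of_le {y : ℝ} (hy : a₀ ≤ |y|) :
    correctionProfile a₀ d γ k y = (|y| + d) ^ γ + k :=
  if_neg (not_lt.2 hy)

theorem correctionProfile_nonneg (hd : 0 ≤ d) (hk : 0 ≤ k) (y : ℝ) :
    0 ≤ correctionProfile a₀ d γ k y := by
  unfold correctionProfile; split_ifs <;> positivity

theorem mul_correctionProfile_sub_le {J : ℝ → ℝ} (hJpos : ∀ x, 0 ≤ J x)
    (hJsupp : ∀ x, d ≤ |x| → J x = 0) (hγ : 0 ≤ γ) (hk : 0 ≤ k) {x : ℝ} (hx : 0 ≤ x) (z : ℝ) :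
    J z * correctionProfile a₀ d γ k (x - z) ≤ J z * (x + d - z) ^ γ + k * J z
      + (2 * d) ^ γ * (Ici x).indicator J z - k * (Ioc (x - a₀) x).indicator J z := by
  by_cases hz : d ≤ |z|
  · simp [indicator_apply, hJsupp z hz]
  obtain ⟨hz1, hz2⟩ := abs_lt.1 (not_le.1 hz)
  have hd : 0 < d := by linarith
  have hJz := hJpos z
  have hpow : 0 ≤ J z * (x + d - z) ^ γ := mul_nonneg hJz (rpow_nonneg (by linarith) _)
  have hIci := indicator_nonneg (fun z _ => hJpos z) z (s := Ici x)
  have h2d := rpow_nonneg (by linarith : (0:ℝ) ≤ 2 * d) γ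
  rcases lt_or_ge x z with hxz | hzx
  · have hfar : correctionProfile a₀ d γ k (x - z) ≤ (2 * d) ^ γ + k := by
      unfold correctionProfile
      split_ifs
      · positivity
      · gcongr
        rw [abs_of_neg (by linarith)]; linarith
    rw [indicator_of_mem (mem_Ici.2 hxz.le),
      indicator_of_notMem (s := Ioc (x - a₀) x) fun h => by linarith [h.2]]
    nlinarith [mul_le_mul_of_nonneg_left hfar hJz]
  rcases lt_or_ge (x - a₀) z with hnear | hbelow
  · rw [correctionProfile, if_pos (abs_lt.2 ⟨by linarith, by linarith⟩),
      indicator_of_mem (show z ∈ Ioc (x - a₀) x from ⟨hnear, hzx⟩)]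
    nlinarith
  · rw [correctionProfile_of_le (by rw [abs_of_nonneg (by linarith)]; linarith),
      abs_of_nonneg (by linarith), show x - z + d = x + d - z by ring,
      indicator_of_notMem (s := Ioc (x - a₀) x) fun h => by linarith [h.1]]
    nlinarith

theorem integral_mul_correctionProfile_sub_le {J : ℝ → ℝ} (hJpos : ∀ x, 0 ≤ J x)
    (hJeven : ∀ x, J (-x) = J x) (hJsupp : ∀ x, d ≤ |x| → J x = 0) (hJint : ∫ x, J x = 1)
    (hJmono : AntitoneOn J (Ici 0)) (ha₀ : 0 < a₀) (hd : 0 ≤ d) (hγ : 0 ≤ γ) (hγ1 : γ ≤ 1)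
    {x : ℝ} (hx : a₀ ≤ x) :
    ∫ z, J z * correctionProfile a₀ d γ ((2 * d) ^ γ * d / a₀) (x - z) ≤
      (x + d) ^ γ + (2 * d) ^ γ * d / a₀
        - γ * (1 - γ) / 2 * (x + 2 * d) ^ (γ - 2) * ∫ z, J z * z ^ 2 := by
  set k := (2 * d) ^ γ * d / a₀
  have hk : 0 ≤ k := by positivity
  have hJ : Integrable J := Integrable.of_integral_ne_zero (by simp [hJint])
  have hx0 : 0 ≤ x := ha₀.le.trans hx
  have htail : (2 * d) ^ γ * ∫ z in Ici x, J z ≤ k * ∫ z in Ioc (x - a₀) x, J z :=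
    calc (2 * d) ^ γ * ∫ z in Ici x, J z
        ≤ (2 * d) ^ γ * (d * J x) := by
          gcongr; exact setIntegral_Ici_le_mul hJ hJsupp hJmono hd hx0
      _ = k * (a₀ * J x) := by simp only [k]; field_simp
      _ ≤ k * ∫ z in Ioc (x - a₀) x, J z := by
          gcongr; exact mul_le_setIntegral_Ioc hJ hJmono ha₀.le hx
  have htaylor := integral_mul_rpow_sub_le hJpos hJsupp hJ hγ hγ1 (b := x + d) (by linarith)
  rw [hJint, integral_mul_id_eq_zero_of_even hJeven, show x + d + d = x + 2 * d by ring]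
    at htaylor
  have h0 : Integrable fun z => J z * (x + d - z) ^ γ := integrable_mul_of_continuous hJ hJsupp
    ((continuous_const.sub continuous_id).rpow_const fun _ => Or.inr hγ)
  have h1 : Integrable fun z => k * J z := hJ.const_mul k
  have h2 : Integrable fun z => (2 * d) ^ γ * (Ici x).indicator J z :=
    (hJ.indicator measurableSet_Ici).const_mul _
  have h3 : Integrable fun z => k * (Ioc (x - a₀) x).indicator J z :=
    (hJ.indicator measurableSet_Ioc).const_mul _
  have hmain : ∫ z, J z * correctionProfile a₀ d γ k (x - z) ≤ ∫ z, (J z * (x + d - z) ^ γ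
      + k * J z + (2 * d) ^ γ * (Ici x).indicator J z - k * (Ioc (x - a₀) x).indicator J z) :=
    integral_mono_of_nonneg
      (ae_of_all _ fun z => mul_nonneg (hJpos z) (correctionProfile_nonneg hd hk (x - z)))
      (((h0.add h1).add h2).sub h3)
      (ae_of_all _ (mul_correctionProfile_sub_le hJpos hJsupp hγ hk hx0))
  rw [integral_sub ((h0.fun_add h1).fun_add h2) h3, integral_add (h0.fun_add h1) h2,
    integral_add h0 h1, integral_const_mul, integral_const_mul, integral_const_mul,
    integral_indicator measurableSet_Ici, integral_indicator measurableSet_Ioc, hJint] at hmain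
  linarith

theorem integral_mul_sub_correctionProfile_le {J : ℝ → ℝ} {q : ℝ} (hJpos : ∀ x, 0 ≤ J x)
    (hJeven : ∀ x, J (-x) = J x) (hJsupp : ∀ x, d ≤ |x| → J x = 0) (hJint : ∫ x, J x = 1)
    (hJmono : AntitoneOn J (Ici 0)) (hq : ∫ z, J z * z ^ 2 = 2 * q) (hqpos : 0 ≤ q)
    (ha₀ : 0 < a₀) (hd : 0 ≤ d) (hγ : 0 ≤ γ) (hγ1 : γ ≤ 1) {x : ℝ} (hx : a₀ ≤ |x|) :
    ∫ y, J (x - y) * correctionProfile a₀ d γ ((2 * d) ^ γ * d / a₀) y ≤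
      (|x| + d) ^ γ + (2 * d) ^ γ * d / a₀ - q * γ * (1 - γ) / 4 * (|x| + d) ^ (γ - 2) := by
  have hfour := rpow_div_four_le (s := |x| + d) (s' := |x| + 2 * d) (r := γ - 2)
    (by linarith) (by linarith) (by linarith) (by linarith)
  have hγ' : 0 ≤ γ * (1 - γ) * q := mul_nonneg (mul_nonneg hγ (by linarith)) hqpos
  rw [integral_mul_sub_eq_integral_mul_abs_sub hJeven correctionProfile_neg]
  have := integral_mul_correctionProfile_sub_le hJpos hJeven hJsupp hJint hJmono ha₀ hd hγ hγ1 hx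
  rw [hq] at this
  nlinarith [mul_le_mul_of_nonneg_left hfour hγ']

end Profile

theorem rpow_add_div_sq_le {s u c k γ : ℝ} (hs : 0 < s) (hsu : s ≤ u) (hγ : 0 ≤ γ) (hγ2 : γ ≤ 2)
    (hc : 0 ≤ c) (hk : k ≤ c * u ^ γ) : (s ^ γ + k) / u ^ 2 ≤ (1 + c) * s ^ (γ - 2) := by
  have hu : 0 < u := hs.trans_le hsu
  have hsγ : s ^ γ ≤ u ^ γ := rpow_le_rpow hs.le hsu hγ
  calc (s ^ γ + k) / u ^ 2 ≤ (1 + c) * u ^ γ / u ^ 2 := by gcongr; linarith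
    _ = (1 + c) * u ^ (γ - 2) := by rw [rpow_sub hu, rpow_two, mul_div_assoc]
    _ ≤ (1 + c) * s ^ (γ - 2) := by
        gcongr ?_ * ?_
        exact rpow_le_rpow_of_nonpos hs hsu (by linarith)

theorem mul_rpow_add_div_le_of_abs_le_mul_sqrt {a₀ d γ p δ ε x t : ℝ} (ha₀ : 0 < a₀)
    (hd : 0 < d) (hγ : 0 ≤ γ) (hγ2 : γ ≤ 2) (hp : 0 ≤ p) (hδ : 0 < δ)
    (hδε : 4 * p * (1 + d / a₀) * δ ^ 2 ≤ ε) (hx : |x| ≤ δ * √t) (ht : (d / δ) ^ 2 ≤ t) :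
    p * (((|x| + d) ^ γ + (2 * d) ^ γ * d / a₀) / t) ≤ ε * (|x| + d) ^ (γ - 2) := by
  have ht0 : 0 < t := (by positivity : 0 < (d / δ) ^ 2).trans_le ht
  have hdt : d ≤ δ * √t := by
    rw [← div_le_iff₀' hδ]; exact le_sqrt_of_sq_le ht
  have hu : (2 * δ * √t) ^ 2 = 4 * δ ^ 2 * t := by
    rw [mul_pow, sq_sqrt ht0.le]; ring
  have hk : (2 * d) ^ γ * d / a₀ ≤ d / a₀ * (2 * δ * √t) ^ γ := by
    rw [mul_div_assoc, mul_comm]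
    exact mul_le_mul_of_nonneg_left (rpow_le_rpow (by positivity) (by linarith) hγ)
      (by positivity)
  have := rpow_add_div_sq_le (s := |x| + d) (u := 2 * δ * √t) (by positivity) (by linarith)
    hγ hγ2 (by positivity) hk
  rw [hu] at this
  calc p * (((|x| + d) ^ γ + (2 * d) ^ γ * d / a₀) / t)
      = 4 * p * δ ^ 2 * (((|x| + d) ^ γ + (2 * d) ^ γ * d / a₀) / (4 * δ ^ 2 * t)) := by
        field_simp
    _ ≤ 4 * p * δ ^ 2 * ((1 + d / a₀) * (|x| + d) ^ (γ - 2)) := by gcongr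
    _ = 4 * p * (1 + d / a₀) * δ ^ 2 * (|x| + d) ^ (γ - 2) := by ring
    _ ≤ ε * (|x| + d) ^ (γ - 2) := by gcongr

theorem exists_pos_lt_one_mul_sq_le {c ε : ℝ} (hc : 0 ≤ c) (hε : 0 < ε) :
    ∃ δ : ℝ, 0 < δ ∧ δ < 1 ∧ c * δ ^ 2 ≤ ε := by
  have hδ0 : 0 < min (1 / 2) (ε / (c + 1)) := by positivity
  have hδ1 : min (1 / 2) (ε / (c + 1)) ≤ 1 / 2 := min_le_left _ _
  have hδε : (c + 1) * min (1 / 2) (ε / (c + 1)) ≤ ε := by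
    rw [← le_div_iff₀' (by positivity)]; exact min_le_right _ _
  exact ⟨_, hδ0, by linarith, by nlinarith⟩

theorem correction_supersolution_general
    (J : ℝ → ℝ) (d a₀ q γ κ : ℝ)
    (hJpos : ∀ x, 0 ≤ J x) (hJeven : ∀ x, J (-x) = J x)
    (hJsupp : ∀ x, d ≤ |x| → J x = 0)
    (hJint : ∫ x, J x = 1)
    (hJmono : AntitoneOn J (Set.Ici 0))
    (hq : ∫ z, J z * z ^ 2 = 2 * q) (hqpos : 0 < q)
    (ha₀ : 0 < a₀) (hd : a₀ < d)
    (hγ : 0 < γ) (hγ1 : γ < 1) (hκ : 0 < κ) :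
    ∃ δ : ℝ, ∃ k : ℝ, 0 < δ ∧ δ < 1 ∧ 0 < k ∧
      ∀ x t : ℝ, a₀ ≤ |x| → |x| ≤ δ * Real.sqrt t → (d / δ) ^ 2 ≤ t →
        let R : ℝ → ℝ → ℝ := fun x' t' =>
          if |x'| < a₀ then 0 else ((|x'| + d) ^ γ + k) * t' ^ (-((3 + κ)/2) : ℝ)
        (q / 8) * γ * (1 - γ) * (|x| + d) ^ (γ - 2) * t ^ (-((3 + κ)/2) : ℝ) ≤
          deriv (fun s => R x s) t - ((∫ y, J (x - y) * R y t) - R x t) := by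
  have hd0 : 0 < d := ha₀.trans hd
  set p := (3 + κ) / 2
  have hp : 0 < p := by positivity
  obtain ⟨δ, hδ0, hδ1, hδε⟩ := exists_pos_lt_one_mul_sq_le (c := 4 * p * (1 + d / a₀))
    (ε := q / 8 * γ * (1 - γ)) (by positivity) (mul_pos (by positivity) (sub_pos.2 hγ1))
  set k := (2 * d) ^ γ * d / a₀
  refine ⟨δ, k, hδ0, hδ1, by positivity, fun x t hx hxt ht => ?_⟩
  intro R
  have hR : R = fun y s => correctionProfile a₀ d γ k y * s ^ (-p) := by
    funext y s; simp only [R, correctionProfile]; split_ifs <;> simp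
  have hgain := integral_mul_sub_correctionProfile_le hJpos hJeven hJsupp hJint hJmono hq
    hqpos.le ha₀ hd0.le hγ.le hγ1.le hx
  have hdecay := mul_rpow_add_div_le_of_abs_le_mul_sqrt ha₀ hd0 hγ.le (by linarith) hp.le hδ0
    hδε hxt ht
  have ht0 : 0 < t := (by positivity : 0 < (d / δ) ^ 2).trans_le ht
  rw [hR]
  simp only [correctionProfile_of_le hx, deriv_const_mul_field', Real.deriv_rpow_const,
    ← mul_assoc, integral_mul_const, rpow_sub_one ht0.ne']
  calc q / 8 * γ * (1 - γ) * (|x| + d) ^ (γ - 2) * t ^ (-p)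
      ≤ ((|x| + d) ^ γ + k - (∫ y, J (x - y) * correctionProfile a₀ d γ k y)
          - p * (((|x| + d) ^ γ + k) / t)) * t ^ (-p) := by
        gcongr; linarith
    _ = _ := by ring

theorem correction_supersolution
    (J : ℝ → ℝ) (d a₀ q γ κ : ℝ)
    (hJpos : ∀ x, 0 ≤ J x) (hJeven : ∀ x, J (-x) = J x)
    (hJsupp : ∀ x, d ≤ |x| → J x = 0)
    (hJint : ∫ x, J x = 1)
    (hJmono : AntitoneOn J (Set.Ici 0))
    (hq : ∫ z, J z * z ^ 2 = 2 * q) (hqpos : 0 < q)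
    (ha₀ : 0 < a₀) (hd : a₀ < d)
    (hγ : 0 < γ) (hγ1 : γ < 1) (hκ : 0 < κ) (hκ1 : κ < 1) :
    ∃ δ : ℝ, ∃ k : ℝ, 0 < δ ∧ δ < 1 ∧ 0 < k ∧
      ∀ x t : ℝ, a₀ ≤ |x| → |x| ≤ δ * Real.sqrt t → (d / δ) ^ 2 ≤ t →
        let R : ℝ → ℝ → ℝ := fun x' t' =>
          if |x'| < a₀ then 0 else ((|x'| + d) ^ γ + k) * t' ^ (-((3 + κ)/2) : ℝ)
        (q / 8) * γ * (1 - γ) * (|x| + d) ^ (γ - 2) * t ^ (-((3 + κ)/2) : ℝ) ≤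
          deriv (fun s => R x s) t - ((∫ y, J (x - y) * R y t) - R x t) :=
  correction_supersolution_general J d a₀ q γ κ hJpos hJeven hJsupp hJint hJmono hq hqpos ha₀ hd hγ
    hγ1 hκ
end

section
/- Let u_λ(x,t) = λ² u(a + λx, λ²t) be the parabolic rescaling of a solution u of the exterior nonlocal problem. If t u(·,t) is uniformly bounded and there exist α, b, C, T with u(x,t) ≤ C(|x|+b) t^{-3/2} e^{-(|x|+b)²/(4αt)} for (|x|+b)² ≤ 4αt, t ≥ T, then for every D > 0 and t₀ > 0 there exist C' and λ₀ such that u_λ(x,t) ≤ C' λ^{-1} t^{-3/2} for all |x| ≤ D/λ, t ≥ t₀, λ ≥ λ₀. -/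
open Real MeasureTheory Set

theorem rescaled_near_hole_bound
    (u : ℝ → ℝ → ℝ) (a : ℝ) (ha : 0 < a)
    (hupos : ∀ x t, 0 ≤ u x t)
    (C₁ : ℝ) (hglobal : ∀ x : ℝ, ∀ t : ℝ, 0 < t → t * u x t ≤ C₁)
    (α b Cb T : ℝ) (hα : 0 < α) (hb : 0 < b) (hCb : 0 < Cb) (hT : 0 < T)
    (hrefined : ∀ x t : ℝ, (|x| + b) ^ 2 ≤ 4 * α * t → T ≤ t →
      u x t ≤ Cb * (|x| + b) * t ^ (-(3/2) : ℝ) *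
        Real.exp (-(|x| + b) ^ 2 / (4 * α * t))) :
    ∀ D : ℝ, 0 < D → ∀ t₀ : ℝ, 0 < t₀ →
      ∃ C' lam₀ : ℝ, 0 < lam₀ ∧
        ∀ lam : ℝ, lam₀ ≤ lam → ∀ x t : ℝ, |x| ≤ D / lam → t₀ ≤ t →
          lam ^ 2 * u (a + lam * x) (lam ^ 2 * t) ≤
            C' * lam⁻¹ * t ^ (-(3/2) : ℝ) := by
  intro D hD t₀ ht₀
  set M : ℝ := a + D + b with hM
  have hMpos : 0 < M := by positivity
  refine ⟨Cb * M, max 1 (max (Real.sqrt (T / t₀)) (M / Real.sqrt (4 * α * t₀))),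
    lt_of_lt_of_le one_pos (le_max_left _ _), ?_⟩
  intro lam hlam x t hx ht
  have hlam1 : (1 : ℝ) ≤ lam := le_trans (le_max_left _ _) hlam
  have hlampos : 0 < lam := lt_of_lt_of_le one_pos hlam1
  have ht0 : 0 < t := lt_of_lt_of_le ht₀ ht
  set y : ℝ := a + lam * x with hy
  set s : ℝ := lam ^ 2 * t with hs
  have hspos : 0 < s := by positivity
  -- |y| ≤ a + D
  have hxD : lam * |x| ≤ D := by
    have := mul_le_mul_of_nonneg_left hx hlampos.le
    rwa [mul_div_cancel₀ _ (ne_of_gt hlampos)] at this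
  have hyb : |y| + b ≤ M := by
    have h1 : |y| ≤ a + D := by
      calc |y| ≤ |a| + |lam * x| := abs_add_le _ _
        _ = a + lam * |x| := by rw [abs_of_pos ha, abs_mul, abs_of_pos hlampos]
        _ ≤ a + D := by linarith
    simpa [hM] using add_le_add_right h1 b
  have hybpos : 0 < |y| + b := by positivity
  -- λ² t ≥ T
  have hsT : T ≤ s := by
    have h1 : Real.sqrt (T / t₀) ≤ lam :=
      le_trans (le_trans (le_max_left _ _) (le_max_right _ _)) hlam
    have h2 : T / t₀ ≤ lam ^ 2 := by
      have := mul_self_le_mul_self (Real.sqrt_nonneg _) h1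
      rwa [Real.mul_self_sqrt (by positivity), ← pow_two] at this
    have h3 : T ≤ lam ^ 2 * t₀ := by
      rw [div_le_iff₀ ht₀] at h2; linarith
    calc T ≤ lam ^ 2 * t₀ := h3
      _ ≤ s := by rw [hs]; nlinarith [sq_nonneg lam]
  -- (|y|+b)² ≤ 4 α s
  have hy4 : (|y| + b) ^ 2 ≤ 4 * α * s := by
    have h1 : M / Real.sqrt (4 * α * t₀) ≤ lam :=
      le_trans (le_trans (le_max_right _ _) (le_max_right _ _)) hlam
    have hsq : 0 < Real.sqrt (4 * α * t₀) := Real.sqrt_pos.mpr (by positivity)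
    have h2 : M ≤ lam * Real.sqrt (4 * α * t₀) := by
      rw [div_le_iff₀ hsq] at h1; linarith
    have h3 : M ^ 2 ≤ lam ^ 2 * (4 * α * t₀) := by
      have := mul_self_le_mul_self hMpos.le h2
      calc M ^ 2 = M * M := sq M
        _ ≤ (lam * Real.sqrt (4 * α * t₀)) * (lam * Real.sqrt (4 * α * t₀)) := this
        _ = lam ^ 2 * (Real.sqrt (4 * α * t₀) * Real.sqrt (4 * α * t₀)) := by ring
        _ = lam ^ 2 * (4 * α * t₀) := by rw [Real.mul_self_sqrt (by positivity)]
    have h4 : (|y| + b) ^ 2 ≤ M ^ 2 := by nlinarith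
    have h5 : lam ^ 2 * (4 * α * t₀) ≤ 4 * α * s := by
      rw [hs]; nlinarith [sq_nonneg lam]
    linarith
  -- apply refined bound
  have href := hrefined y s hy4 hsT
  have hexp : Real.exp (-(|y| + b) ^ 2 / (4 * α * s)) ≤ 1 := by
    apply Real.exp_le_one_iff.mpr
    apply div_nonpos_of_nonpos_of_nonneg
    · simpa using sq_nonneg (|y| + b)
    · positivity
  have hsrpow : 0 < s ^ (-(3/2) : ℝ) := Real.rpow_pos_of_pos hspos _
  have hub : u y s ≤ Cb * M * s ^ (-(3/2) : ℝ) := by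
    calc u y s ≤ Cb * (|y| + b) * s ^ (-(3/2) : ℝ) *
        Real.exp (-(|y| + b) ^ 2 / (4 * α * s)) := href
      _ ≤ Cb * (|y| + b) * s ^ (-(3/2) : ℝ) * 1 := by
          apply mul_le_mul_of_nonneg_left hexp; positivity
      _ = Cb * (|y| + b) * s ^ (-(3/2) : ℝ) := by ring
      _ ≤ Cb * M * s ^ (-(3/2) : ℝ) := by
          apply mul_le_mul_of_nonneg_right _ hsrpow.le
          exact mul_le_mul_of_nonneg_left hyb hCb.le
  -- rpow algebra: s^{-3/2} = λ^{-3} t^{-3/2}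
  have hsplit : s ^ (-(3/2) : ℝ) = lam ^ (-(3) : ℝ) * t ^ (-(3/2) : ℝ) := by
    rw [hs, Real.mul_rpow (by positivity) ht0.le]
    congr 1
    rw [← Real.rpow_natCast lam 2, ← Real.rpow_mul hlampos.le]
    norm_num
  have hlamrw : lam ^ 2 * lam ^ (-(3) : ℝ) = lam⁻¹ := by
    rw [← Real.rpow_natCast lam 2, ← Real.rpow_add hlampos]
    norm_num
    exact Real.rpow_neg_one lam
  calc lam ^ 2 * u y s ≤ lam ^ 2 * (Cb * M * s ^ (-(3/2) : ℝ)) := by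
        apply mul_le_mul_of_nonneg_left hub; positivity
    _ = Cb * M * (lam ^ 2 * lam ^ (-(3) : ℝ)) * t ^ (-(3/2) : ℝ) := by
        rw [hsplit]; ring
    _ = Cb * M * lam⁻¹ * t ^ (-(3/2) : ℝ) := by rw [hlamrw]
end
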